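/- Assume n ≤ m and liminf_{n→∞} mp/ln n ≥ 1 (i.e., mp ≥ (1+o(1)) ln n). Then for all sufficiently large n, the probability that there exists a set S ⊆ V of size |S| = n/5000 with W(S) ≤ 0.3·m·min{np/5000, 1} is at most exp(-0.04·n). -/

import Mathlib

open MeasureTheory Filter

noncomputable def bern (p : ℝ) : Measure Bool :=
  (PMF.bernoulli (min (Real.toNNReal p) 1) (min_le_right _ _)).toMeasure

/-- The random intersection graph model: the sample space is the bipartite
choice structure `ω : Fin n → Fin m → Bool`, where `ω v w = true` means vertex `v`
chose feature `w`, each choice made independently with probability `p`. -/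
noncomputable def rig (n m : ℕ) (p : ℝ) : Measure (Fin n → Fin m → Bool) :=
  Measure.pi fun _ => Measure.pi fun _ => bern p

/-- The intersection graph determined by the choices `ω`:
two distinct vertices are adjacent iff they share a feature. -/
def rigGraph {n m : ℕ} (ω : Fin n → Fin m → Bool) : SimpleGraph (Fin n) where
  Adj v v' := v ≠ v' ∧ ∃ w, ω v w = true ∧ ω v' w = true
  symm := ⟨by rintro v v' ⟨h, w, h1, h2⟩; exact ⟨h.symm, w, h2, h1⟩⟩
  loopless := ⟨by rintro v ⟨h, -⟩; exact h rfl⟩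

/-- degree of `v` in the intersection graph -/
noncomputable def deg {n m : ℕ} (ω : Fin n → Fin m → Bool) (v : Fin n) : ℕ :=
  Set.ncard {u | (rigGraph ω).Adj v u}

/-- `W(v)`: number of features chosen by `v` -/
noncomputable def Wv {n m : ℕ} (ω : Fin n → Fin m → Bool) (v : Fin n) : ℕ :=
  Set.ncard {w | ω v w = true}

/-- `V(w)`: number of vertices choosing feature `w` -/
noncomputable def Vw {n m : ℕ} (ω : Fin n → Fin m → Bool) (w : Fin m) : ℕ :=
  Set.ncard {v | ω v w = true}

/-- `W'(v)`: number of features chosen by `v` that are chosen by at least two vertices -/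
noncomputable def Wv' {n m : ℕ} (ω : Fin n → Fin m → Bool) (v : Fin n) : ℕ :=
  Set.ncard {w | ω v w = true ∧ 2 ≤ Set.ncard {u | ω u w = true}}

/-- `W(S)`: number of features chosen by at least one vertex of `S` -/
noncomputable def WS {n m : ℕ} (ω : Fin n → Fin m → Bool) (S : Set (Fin n)) : ℕ :=
  Set.ncard {w | ∃ v ∈ S, ω v w = true}

/-- `V(R)`: number of vertices choosing at least one feature of `R` -/
noncomputable def VR {n m : ℕ} (ω : Fin n → Fin m → Bool) (R : Set (Fin m)) : ℕ :=
  Set.ncard {v | ∃ w ∈ R, ω v w = true}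

/-- `W''(K)`: number of features chosen by at least two vertices of `K` -/
noncomputable def WSpp {n m : ℕ} (ω : Fin n → Fin m → Bool) (K : Set (Fin n)) : ℕ :=
  Set.ncard {w | 2 ≤ Set.ncard {v | v ∈ K ∧ ω v w = true}}

/-- `N(S)`: number of vertices outside `S` adjacent to at least one vertex of `S` -/
noncomputable def NS {n m : ℕ} (ω : Fin n → Fin m → Bool) (S : Set (Fin n)) : ℕ :=
  Set.ncard {u | u ∉ S ∧ ∃ v ∈ S, (rigGraph ω).Adj v u}

noncomputable def d0 (n m : ℕ) (p : ℝ) : ℝ := m * p * (1 - (1 - p) ^ (n - 1))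

noncomputable def d1 (n m : ℕ) (p : ℝ) : ℝ := n * m * p ^ 2

/-! Union bound over the `C(n, k) ≤ e^{11k}` sets `S` of size `k = ⌊n/5000⌋`. For a fixed `S`,
the events "feature `w` is chosen by some vertex of `S`" are independent across `w` (they depend
on disjoint columns of the choice matrix), each of probability
`q = 1 - (1-p)^k ≥ (1 - e⁻¹) min(kp, 1)`. The Chernoff bound at `t = -log 2` gives
`P(W(S) ≤ s) ≤ 2^s (1 - q/2)^m ≤ exp(s log 2 - mq/2)`, and for `s = 0.3 m T`,
`T = min(np/5000, 1)`, this is at most `exp(-0.06 m T)`. Finally `mT ≥ n`, since `m ≥ n` and the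
liminf hypothesis forces `mp → ∞`. -/

open Real ProbabilityTheory

namespace ProbabilityTheory

variable {Ω : Type*} [MeasurableSpace Ω] {μ : Measure Ω} {t : ℝ}

theorem mgf_pi_sum {ι : Type*} [Fintype ι] [SigmaFinite μ] (Y : Ω → ℝ) :
    mgf (fun η : ι → Ω => ∑ i, Y (η i)) (Measure.pi fun _ => μ) t =
      mgf Y μ t ^ Fintype.card ι := by
  simp only [mgf, Finset.mul_sum, Real.exp_sum]
  exact integral_fintype_prod_eq_pow (ι := ι) (μ := μ) (fun x => exp (t * Y x))

theorem measureReal_pi_sum_le_le_exp_mul_mgf_pow {ι : Type*} [Fintype ι] [IsFiniteMeasure μ]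
    {Y : Ω → ℝ} (ht : t ≤ 0) (hY : Integrable (fun x => exp (t * Y x)) μ) (ε : ℝ) :
    (Measure.pi fun _ : ι => μ).real {η | ∑ i, Y (η i) ≤ ε} ≤
      exp (-t * ε) * mgf Y μ t ^ Fintype.card ι := by
  rw [← mgf_pi_sum Y]
  refine measure_le_le_exp_mul_mgf ε ht ?_
  simp only [Finset.mul_sum, Real.exp_sum]
  exact Integrable.fintype_prod fun _ => hY

theorem mgf_indicator_one [IsProbabilityMeasure μ] {A : Set Ω} (hA : MeasurableSet A) :
    mgf (A.indicator 1) μ t = exp t + (1 - exp t) * μ.real Aᶜ := by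
  have hpt : ∀ x, exp (t * A.indicator 1 x) = exp t + (1 - exp t) * Aᶜ.indicator 1 x := by
    intro x
    by_cases hx : x ∈ A <;> simp [hx]
  simp only [mgf, hpt]
  rw [integral_add (integrable_const _) ((integrable_indicator_iff hA.compl).2
      (integrable_const _).integrableOn |>.const_mul _),
    integral_const_mul, integral_indicator_one hA.compl]
  simp

end ProbabilityTheory

section RandomIntersectionGraph

open Finset

instance (p : ℝ) : IsProbabilityMeasure (bern p) := PMF.toMeasure.isProbabilityMeasure _

instance (n m : ℕ) (p : ℝ) : IsProbabilityMeasure (rig n m p) := by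
  unfold rig; infer_instance

variable {n m : ℕ} {p : ℝ}

theorem bern_singleton_false (hp0 : 0 ≤ p) (hp1 : p ≤ 1) :
    bern p {false} = ENNReal.ofReal (1 - p) := by
  rw [bern, PMF.toMeasure_apply_singleton _ _ (measurableSet_singleton _)]
  change 1 - ((min (Real.toNNReal p) 1 : NNReal) : ENNReal) = _
  rw [min_eq_left (Real.toNNReal_le_one.2 hp1), ENNReal.ofReal_sub _ hp0, ENNReal.ofReal_one]
  rfl

theorem rig_eq_map_swap :
    rig n m p = (Measure.pi fun _ : Fin m => Measure.pi fun _ : Fin n => bern p).map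
      Function.swap := by
  have hswap : Measurable (Function.swap : (Fin m → Fin n → Bool) → Fin n → Fin m → Bool) := by
    fun_prop
  refine Measure.ext_of_singleton fun ω => ?_
  rw [Measure.map_apply hswap (measurableSet_singleton ω),
    show Function.swap ⁻¹' {ω} = {Function.swap ω} by
      ext η; constructor <;> rintro rfl <;> rfl]
  simp only [rig, Measure.pi_singleton, Function.swap]
  exact Finset.prod_comm

theorem measureReal_pi_bern_forall_false (hp0 : 0 ≤ p) (hp1 : p ≤ 1) (S : Finset (Fin n)) :
    (Measure.pi fun _ : Fin n => bern p).real {c | ∀ v ∈ S, c v = false} = (1 - p) ^ #S := by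
  classical
  have hbox : {c : Fin n → Bool | ∀ v ∈ S, c v = false} =
      Set.univ.pi fun v => if v ∈ S then {false} else Set.univ := by
    ext c
    simp only [Set.mem_ofPred_eq, Set.mem_pi, Set.mem_univ, true_implies]
    refine forall_congr' fun v => ?_
    split_ifs <;> simp [*]
  rw [measureReal_def, hbox, Measure.pi_pi]
  simp only [apply_ite, measure_univ, Finset.prod_ite_mem, Finset.univ_inter, Finset.prod_const,
    bern_singleton_false hp0 hp1, ENNReal.toReal_pow, ENNReal.toReal_ofReal (sub_nonneg.2 hp1)]

theorem WS_swap_eq_sum_indicator (η : Fin m → Fin n → Bool) (S : Set (Fin n)) :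
    (WS (Function.swap η) S : ℝ) =
      ∑ w, {c : Fin n → Bool | ∃ v ∈ S, c v = true}.indicator 1 (η w) := by
  classical
  rw [WS, Set.ncard_eq_toFinset_card', Set.toFinset_ofPred, Finset.card_filter]
  push_cast
  simp [Set.indicator_apply, Function.swap]

theorem measureReal_WS_le_le (hp0 : 0 ≤ p) (hp1 : p ≤ 1) (S : Finset (Fin n)) (t : ℝ) :
    (rig n m p).real {ω | (WS ω S : ℝ) ≤ t} ≤
      exp (log 2 * t) * (1 / 2 + (1 - p) ^ #S / 2) ^ m := by
  set A : Set (Fin n → Bool) := {c | ∃ v ∈ S, c v = true}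
  have hAc : Aᶜ = {c | ∀ v ∈ S, c v = false} := by ext; simp [A]
  have hmgf : mgf (A.indicator 1) (Measure.pi fun _ : Fin n => bern p) (-log 2) =
      1 / 2 + (1 - p) ^ #S / 2 := by
    rw [mgf_indicator_one (Set.toFinite A).measurableSet, hAc,
      measureReal_pi_bern_forall_false hp0 hp1, exp_neg, exp_log two_pos]
    ring
  have hchernoff := measureReal_pi_sum_le_le_exp_mul_mgf_pow (ι := Fin m)
    (neg_nonpos.2 (log_nonneg one_le_two)) (Integrable.of_finite
      (μ := Measure.pi fun _ : Fin n => bern p) (f := fun x => exp (-log 2 * A.indicator 1 x))) t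
  rw [hmgf, neg_neg, Fintype.card_fin] at hchernoff
  rw [rig_eq_map_swap, measureReal_def,
    Measure.map_apply (by fun_prop) (Set.toFinite _).measurableSet, ← measureReal_def]
  simp only [Set.preimage_ofPred_eq, WS_swap_eq_sum_indicator]
  exact hchernoff

theorem measureReal_exists_WS_le_le (hp0 : 0 ≤ p) (hp1 : p ≤ 1) (k : ℕ) (t : ℝ) :
    (rig n m p).real {ω | ∃ S : Set (Fin n), S.ncard = k ∧ (WS ω S : ℝ) ≤ t} ≤
      n.choose k * (exp (log 2 * t) * (1 / 2 + (1 - p) ^ k / 2) ^ m) := by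
  classical
  have hcover :
      {ω : Fin n → Fin m → Bool | ∃ S : Set (Fin n), S.ncard = k ∧ (WS ω S : ℝ) ≤ t} ⊆
        ⋃ S ∈ powersetCard k (univ : Finset (Fin n)), {ω | (WS ω ↑S : ℝ) ≤ t} := by
    rintro ω ⟨S, hS, hWS⟩
    simp only [Set.mem_iUnion]
    exact ⟨S.toFinset,
      mem_powersetCard.2 ⟨subset_univ _, by rw [← Set.ncard_eq_toFinset_card', hS]⟩,
      by simpa using hWS⟩
  calc _ ≤ ∑ S ∈ powersetCard k (univ : Finset (Fin n)),
          (rig n m p).real {ω | (WS ω ↑S : ℝ) ≤ t} :=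
        (measureReal_mono hcover (measure_ne_top _ _)).trans (measureReal_biUnion_finset_le _ _)
    _ ≤ ∑ S ∈ powersetCard k (univ : Finset (Fin n)),
          exp (log 2 * t) * (1 / 2 + (1 - p) ^ k / 2) ^ m :=
        sum_le_sum fun S hS => (mem_powersetCard.1 hS).2 ▸ measureReal_WS_le_le hp0 hp1 S t
    _ = _ := by rw [sum_const, card_powersetCard, card_univ, Fintype.card_fin, nsmul_eq_mul]

end RandomIntersectionGraph

theorem Nat.choose_le_exp_one_mul_div_pow (n k : ℕ) :
    (n.choose k : ℝ) ≤ (exp 1 * n / k) ^ k := by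
  rcases k.eq_zero_or_pos with rfl | hk
  · simp
  have hk' : (0 : ℝ) < k := by exact_mod_cast hk
  calc (n.choose k : ℝ) ≤ n ^ k / k.factorial := Nat.choose_le_pow_div k n
    _ = (n / k) ^ k * ((k : ℝ) ^ k / k.factorial) := by
        rw [div_pow, mul_div_assoc', div_mul_cancel₀ _ (pow_ne_zero _ hk'.ne')]
    _ ≤ (n / k) ^ k * exp k := by gcongr; exact pow_div_factorial_le_exp _ hk'.le k
    _ = (exp 1 * n / k) ^ k := by rw [← exp_one_pow, ← mul_pow, mul_div_assoc, mul_comm]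

theorem choose_le_exp_eleven_mul {n k : ℕ} (h : n ≤ 10000 * k) :
    (n.choose k : ℝ) ≤ exp (11 * k) := by
  have he10 : (10000 : ℝ) ≤ exp 10 := by
    calc (10000 : ℝ) ≤ 2.7182818283 ^ 10 := by norm_num
      _ ≤ exp 1 ^ 10 := by gcongr; exact exp_one_gt_d9.le
      _ = exp 10 := by rw [exp_one_pow]; norm_num
  have hnk : (n : ℝ) / k ≤ 10000 :=
    div_le_of_le_mul₀ k.cast_nonneg (by norm_num) (by exact_mod_cast h)
  calc (n.choose k : ℝ) ≤ (exp 1 * n / k) ^ k := Nat.choose_le_exp_one_mul_div_pow n k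
    _ ≤ (exp 1 * exp 10) ^ k := by rw [mul_div_assoc]; gcongr; exact hnk.trans he10
    _ = exp (11 * k) := by rw [← exp_add, ← exp_nat_mul]; ring_nf

theorem Real.one_sub_exp_neg_one_mul_min_le {x : ℝ} (hx : 0 ≤ x) :
    (1 - exp (-1)) * min x 1 ≤ 1 - exp (-x) := by
  rcases le_or_gt x 1 with h | h
  · rw [min_eq_left h]
    have hconv : exp ((1 - x) • (0 : ℝ) + x • (-1 : ℝ)) ≤ (1 - x) • exp 0 + x • exp (-1) :=
      convexOn_exp.2 (Set.mem_univ _) (Set.mem_univ _) (by linarith) hx (by ring)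
    simp only [smul_eq_mul, mul_zero, mul_neg, mul_one, exp_zero, zero_add] at hconv
    linarith
  · rw [min_eq_right h.le]
    linarith [exp_le_exp.2 (neg_le_neg h.le)]

theorem one_sub_exp_neg_one_mul_min_le_one_sub_pow {p : ℝ} (hp0 : 0 ≤ p) (hp1 : p ≤ 1)
    (k : ℕ) :
    (1 - exp (-1)) * min (k * p) 1 ≤ 1 - (1 - p) ^ k := by
  have hpow : (1 - p) ^ k ≤ exp (-(k * p)) := by
    calc (1 - p) ^ k ≤ exp (-p) ^ k := pow_le_pow_left₀ (by linarith) (one_sub_le_exp_neg p) k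
      _ = exp (-(k * p)) := by rw [← exp_nat_mul]; ring_nf
  linarith [Real.one_sub_exp_neg_one_mul_min_le (mul_nonneg k.cast_nonneg hp0)]

theorem choose_mul_exp_mul_pow_le_exp {n m : ℕ} {p : ℝ} (hp0 : 0 ≤ p) (hp1 : p ≤ 1)
    (hn : 50000 ≤ n) (hnm : n ≤ m) (hmp : 5000 ≤ m * p) :
    n.choose (n / 5000) * (exp (log 2 * (0.3 * m * min (n * p / 5000) 1)) *
      (1 / 2 + (1 - p) ^ (n / 5000) / 2) ^ m) ≤ exp (-0.04 * n) := by
  set k := n / 5000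
  set T := min ((n : ℝ) * p / 5000) 1 with hT
  set q := 1 - (1 - p) ^ k
  have hn' : (50000 : ℝ) ≤ n := by exact_mod_cast hn
  have hk_le : (k : ℝ) ≤ n / 5000 := by
    rw [le_div_iff₀ (by norm_num)]; exact_mod_cast Nat.div_mul_le_self n 5000
  have hk_ge : 0.9 * (n / 5000 : ℝ) ≤ k := by
    have : (n : ℝ) + 1 ≤ 5000 * (k + 1) := by
      exact_mod_cast (by omega : n + 1 ≤ 5000 * (k + 1))
    linarith
  have hmT : (n : ℝ) ≤ m * T := by
    rw [hT, mul_min_of_nonneg _ _ m.cast_nonneg, mul_one]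
    refine le_min ?_ (by exact_mod_cast hnm)
    nlinarith
  have hq_ge : 0.54 * T ≤ q := by
    have hmin : 0.9 * T ≤ min (k * p) 1 :=
      le_min (by nlinarith [min_le_left ((n : ℝ) * p / 5000) 1])
        (by linarith [min_le_right ((n : ℝ) * p / 5000) 1])
    have hT0 : 0 ≤ T := le_min (by positivity) zero_le_one
    nlinarith [one_sub_exp_neg_one_mul_min_le_one_sub_pow hp0 hp1 k, exp_neg_one_lt_d9]
  have hpow : (1 / 2 + (1 - p) ^ k / 2) ^ m ≤ exp (-(m * q) / 2) := by
    calc (1 / 2 + (1 - p) ^ k / 2) ^ m ≤ exp (-q / 2) ^ m :=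
          pow_le_pow_left₀ (by positivity) (by linarith [add_one_le_exp (-q / 2)]) m
      _ = exp (-(m * q) / 2) := by rw [← exp_nat_mul]; ring_nf
  -- `0.3 log 2 < 0.21 < 0.54 / 2`; the margin `0.06 m T ≥ 0.06 n` absorbs `11 k ≤ 0.0022 n`.
  have hexponent : 11 * k + log 2 * (0.3 * m * T) + -(m * q) / 2 ≤ -0.04 * n := by
    have hmT0 : 0 ≤ (m : ℝ) * T := by linarith
    nlinarith [log_two_lt_d9, mul_le_mul_of_nonneg_left hq_ge (m.cast_nonneg : (0 : ℝ) ≤ m)]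
  calc _ ≤ exp (11 * k) * (exp (log 2 * (0.3 * m * T)) * exp (-(m * q) / 2)) := by
        gcongr
        exact choose_le_exp_eleven_mul (by omega)
    _ = exp (11 * k + log 2 * (0.3 * m * T) + -(m * q) / 2) := by
        rw [← exp_add, ← exp_add, add_assoc]
    _ ≤ exp (-0.04 * n) := exp_le_exp.2 hexponent

theorem tendsto_atTop_of_pos_liminf_div_log {a : ℕ → ℝ} (ha : ∀ n, 0 ≤ a n)
    (h : 0 < liminf (fun n => a n / log n) atTop) : Tendsto a atTop atTop := by
  obtain ⟨c, hc0, hc⟩ := exists_between h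
  have hbdd : IsBoundedUnder (· ≥ ·) atTop (fun n => a n / log n) :=
    isBoundedUnder_of ⟨0, fun n => div_nonneg (ha n) (log_natCast_nonneg n)⟩
  refine tendsto_atTop_mono' atTop ?_
    ((tendsto_log_atTop.comp tendsto_natCast_atTop_atTop).const_mul_atTop hc0)
  filter_upwards [eventually_lt_of_lt_liminf hc hbdd, eventually_gt_atTop 1] with n hn hn1
  exact ((lt_div_iff₀ (log_pos (by exact_mod_cast hn1))).1 hn).le

theorem linear_sets_cover_features_m_large (m : ℕ → ℕ) (p : ℕ → ℝ)
    (hp : ∀ n, p n ∈ Set.Ioo (0 : ℝ) 1)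
    (hnm : ∀ᶠ (n : ℕ) in atTop, n ≤ m n)
    (hmp : 1 ≤ Filter.liminf (fun (n : ℕ) => (m n : ℝ) * p n / Real.log n) atTop) :
    ∀ᶠ (n : ℕ) in atTop,
      (rig n (m n) (p n)
        {ω | ∃ S : Set (Fin n), S.ncard = n / 5000 ∧
          (WS ω S : ℝ) ≤ 0.3 * (m n : ℝ) * min ((n : ℝ) * p n / 5000) 1}).toReal
      ≤ Real.exp (-0.04 * n) := by
  have hmp_large : ∀ᶠ n in atTop, 5000 ≤ (m n : ℝ) * p n :=
    (tendsto_atTop_of_pos_liminf_div_log (fun n => mul_nonneg (m n).cast_nonneg (hp n).1.le)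
      (zero_lt_one.trans_le hmp)).eventually_ge_atTop 5000
  filter_upwards [eventually_ge_atTop 50000, hnm, hmp_large] with n hn hnm hmp
  exact (measureReal_exists_WS_le_le (hp n).1.le (hp n).2.le _ _).trans
    (choose_mul_exp_mul_pow_le_exp (hp n).1.le (hp n).2.le hn hnm hmp)
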